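/- arXiv:2505.05734 — 3 statements merged into one kernel-verified Lean document; each statement's English description precedes it below -/
import Mathlib

section
/- Let (s_n) be the generalized Fibonacci sequence with a, b ∈ ℕ⁺, c_0, c_1 ∈ ℤ, (c_0,c_1) ≠ (0,0), and suppose 2c_1 − j_1·c_0 = 0, where j_1 = a + √(a²+4b). If γ_1, γ_2, γ_3 are real polynomials with γ_1(n)·s_{n+1} + γ_2(n)·s_n + γ_3(n) = 0 for all positive integers n, then γ_2 = −(j_1/2)·γ_1 (as polynomials) and γ_3 is the zero polynomial. -/
/-!
Write `r = j₁/2`. The hypothesis says `c₁ = r c₀`, and `r` is a root of `x² = a x + b`, so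
`sₙ = c₀ rⁿ` with `c₀ ≠ 0`. The relation becomes `P(n) rⁿ + γ₃(n) = 0` with
`P = c₀ (γ₂ + r γ₁)`. Since `r > 1`, polynomial growth cannot balance exponential growth,
which forces `P = 0` and then `γ₃ = 0`.
-/

open Filter Polynomial Topology

namespace Polynomial

theorem eq_zero_of_tendsto_eval_natCast {P : ℝ[X]}
    (h : Tendsto (fun n : ℕ => P.eval (n : ℝ)) atTop (𝓝 0)) : P = 0 := by
  rcases lt_or_ge 0 P.degree with hdeg | hdeg
  · have hinf := (P.abs_tendsto_atTop hdeg).comp tendsto_natCast_atTop_atTop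
    exact absurd (by simpa [Function.comp_def] using h.abs)
      (not_tendsto_nhds_of_tendsto_atTop hinf 0)
  · rw [eq_C_of_degree_le_zero hdeg] at h ⊢
    simpa using h

theorem tendsto_eval_natCast_div_pow (P : ℝ[X]) {r : ℝ} (hr : 1 < r) :
    Tendsto (fun n : ℕ => P.eval (n : ℝ) / r ^ n) atTop (𝓝 0) := by
  have hO : (fun n : ℕ => P.eval (n : ℝ)) =O[atTop] fun n : ℕ => (n : ℝ) ^ P.natDegree := by
    have := (P.isBigO_atTop_of_degree_le (X ^ P.natDegree)
      (by simp)).comp_tendsto tendsto_natCast_atTop_atTop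
    simpa only [Function.comp_def, eval_pow, eval_X] using this
  exact (hO.trans_isLittleO (isLittleO_pow_const_const_pow_of_one_lt _ hr)).tendsto_div_nhds_zero

theorem eq_zero_of_eval_mul_pow_add_eval_eq_zero {P Q : ℝ[X]} {r : ℝ} (hr : 1 < r)
    (h : ∀ᶠ n : ℕ in atTop, P.eval (n : ℝ) * r ^ n + Q.eval (n : ℝ) = 0) : P = 0 ∧ Q = 0 := by
  have hP : P = 0 := by
    refine eq_zero_of_tendsto_eval_natCast ?_
    have hQ := (Q.tendsto_eval_natCast_div_pow hr).neg
    rw [neg_zero] at hQ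
    refine hQ.congr' ?_
    filter_upwards [h] with n hn
    have : r ^ n ≠ 0 := by positivity
    field_simp
    linarith
  subst hP
  refine ⟨rfl, eq_zero_of_tendsto_eval_natCast (tendsto_const_nhds.congr' ?_)⟩
  filter_upwards [h] with n hn
  simpa using hn.symm

end Polynomial

theorem eq_mul_pow_of_recurrence {R : Type*} [CommRing R] {a b r : R} {s : ℕ → R}
    (hrec : ∀ n, s (n + 2) = a * s (n + 1) + b * s n) (hr : r ^ 2 = a * r + b)
    (h1 : s 1 = r * s 0) (n : ℕ) : s n = s 0 * r ^ n := by
  induction n using Nat.twoStepInduction with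
  | zero => ring
  | one => rw [h1]; ring
  | more n ih ih' => rw [hrec, ih, ih']; linear_combination -(s 0 * r ^ n) * hr

theorem half_add_sqrt_sq_eq {a b : ℝ} (h : 0 ≤ a ^ 2 + 4 * b) :
    ((a + √(a ^ 2 + 4 * b)) / 2) ^ 2 = a * ((a + √(a ^ 2 + 4 * b)) / 2) + b := by
  linear_combination Real.sq_sqrt h / 4

theorem one_lt_half_add_sqrt {a b : ℝ} (ha : 1 ≤ a) (hb : 0 < b) :
    1 < (a + √(a ^ 2 + 4 * b)) / 2 := by
  have : a < √(a ^ 2 + 4 * b) := Real.lt_sqrt_of_sq_lt (by linarith)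
  linarith

theorem stmt_16 (a b : ℕ) (ha : 0 < a) (hb : 0 < b) (c0 c1 : ℤ)
    (hc : (c0, c1) ≠ (0, 0)) (s : ℕ → ℝ)
    (hs0 : s 0 = c0) (hs1 : s 1 = c1)
    (hrec : ∀ n : ℕ, s (n + 2) = a * s (n + 1) + b * s n)
    (h1 : 2 * (c1 : ℝ) - ((a : ℝ) + Real.sqrt ((a : ℝ) ^ 2 + 4 * b)) * c0 = 0)
    (γ1 γ2 γ3 : Polynomial ℝ)
    (hγ : ∀ n : ℕ, 1 ≤ n →
      γ1.eval (n : ℝ) * s (n + 1) + γ2.eval (n : ℝ) * s n + γ3.eval (n : ℝ) = 0) :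
    γ2 = Polynomial.C (-(((a : ℝ) + Real.sqrt ((a : ℝ) ^ 2 + 4 * b)) / 2)) * γ1 ∧
      γ3 = 0 := by
  set r := ((a : ℝ) + √((a : ℝ) ^ 2 + 4 * b)) / 2
  have hr : 1 < r := one_lt_half_add_sqrt (by exact_mod_cast ha) (by exact_mod_cast hb)
  have hs (n : ℕ) : s n = c0 * r ^ n := by
    rw [eq_mul_pow_of_recurrence hrec (half_add_sqrt_sq_eq (by positivity)) (by
      rw [hs0, hs1]; linarith) n, hs0]
  have hc0 : (c0 : ℝ) ≠ 0 := by
    intro h0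
    have hc1 : (c1 : ℝ) = 0 := by rw [h0] at h1; linarith
    exact hc (by simp_all)
  obtain ⟨hP, hγ3⟩ := eq_zero_of_eval_mul_pow_add_eval_eq_zero (Q := γ3)
    (P := C (c0 : ℝ) * (γ2 + C r * γ1)) hr (by
      filter_upwards [eventually_ge_atTop 1] with n hn
      rw [← hγ n hn, hs, hs]
      simp only [eval_mul, eval_add, eval_C]
      ring)
  have hγ2 : γ2 + C r * γ1 = 0 := (mul_eq_zero.mp hP).resolve_left (C_ne_zero.mpr hc0)
  exact ⟨by rw [C_neg]; linear_combination hγ2, hγ3⟩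
end

section
/- Let (s_n) be the generalized Fibonacci sequence with a, b ∈ ℕ⁺ (a + b > 1), c_0, c_1 ∈ ℤ, (c_0,c_1) ≠ (0,0), and assume both 2c_1 − j_1·c_0 and 2c_1 − j_2·c_0 are nonzero, where j_{1,2} = a ± √(a²+4b). Then for every polynomial P ∈ ℝ[x], the triple (F_1, G_1, H_1) ∈ ℝ[x]³ satisfying 2·∑_{k=1}^n P(k)·s_{k−1} = F_1(n)·s_{n+1} + G_1(n)·s_n + H_1(n) for all positive integers n is unique. -/
open Polynomial Filter Topology

/-!
Existence: `F ↦ b F(x) + a F(x - 1) - F(x - 2)` multiplies leading coefficients by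
`a + b - 1 ≠ 0`, so it is onto `ℝ[X]`, and summing `F` against the recurrence telescopes.

Uniqueness: by Binet, `s n = α r₁ⁿ + β r₂ⁿ` with `r₁ > max 1 |r₂|`, `r₂ < 0`, and the two
nondegeneracy hypotheses say exactly `α ≠ 0`, `β ≠ 0`. A relation
`F(n) s(n+1) + G(n) s(n) + H(n) = 0` reads `α A(n) r₁ⁿ + β B(n) r₂ⁿ + H(n) = 0` with
`A = r₁F + G`, `B = r₂F + G`. Dividing by `r₁ⁿ` and letting `n → ∞` gives `A = 0`; then
`β B(n) r₂ⁿ = -H(n)` with `r₂ ∉ {0, 1}` forces `B = H = 0`, and `r₁ ≠ r₂` gives `F = G = 0`.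
-/

namespace Polynomial

theorem eq_zero_of_tendsto_eval_natCast_nhds_zero {p : ℝ[X]}
    (h : Tendsto (fun n : ℕ => p.eval (n : ℝ)) atTop (𝓝 0)) : p = 0 := by
  rcases lt_or_ge 0 p.degree with hdeg | hdeg
  · have h_abs : Tendsto (fun n : ℕ => |p.eval (n : ℝ)|) atTop atTop :=
      (p.abs_tendsto_atTop hdeg).comp tendsto_natCast_atTop_atTop
    exact absurd (by simpa using h.abs) (not_tendsto_nhds_of_tendsto_atTop h_abs 0)
  · rw [eq_C_of_degree_le_zero hdeg] at h ⊢
    simpa using h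

theorem eq_zero_of_eventually_eval_natCast_eq_zero {p : ℝ[X]}
    (h : ∀ᶠ n : ℕ in atTop, p.eval (n : ℝ) = 0) : p = 0 :=
  eq_zero_of_tendsto_eval_natCast_nhds_zero <|
    tendsto_const_nhds.congr' (h.mono fun _ hn => hn.symm)

theorem tendsto_eval_natCast_mul_pow_of_abs_lt_one (p : ℝ[X]) {r : ℝ} (hr : |r| < 1) :
    Tendsto (fun n : ℕ => p.eval (n : ℝ) * r ^ n) atTop (𝓝 0) := by
  induction p using Polynomial.induction_on' with
  | add p q hp hq => simpa [add_mul] using hp.add hq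
  | monomial k c =>
    simpa [mul_assoc] using (tendsto_pow_const_mul_const_pow_of_abs_lt_one k hr).const_mul c

theorem eq_zero_of_eventually_eval_mul_pow_add {p q h : ℝ[X]} {r t : ℝ} (hr : 1 < |r|)
    (ht : |t| < |r|)
    (hpqh : ∀ᶠ n : ℕ in atTop,
      p.eval (n : ℝ) * r ^ n + q.eval (n : ℝ) * t ^ n + h.eval (n : ℝ) = 0) :
    p = 0 := by
  have hr0 : r ≠ 0 := abs_pos.1 (zero_lt_one.trans hr)
  have hq := q.tendsto_eval_natCast_mul_pow_of_abs_lt_one (r := t / r)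
    (by rw [abs_div, div_lt_one (zero_lt_one.trans hr)]; exact ht)
  have hh := h.tendsto_eval_natCast_mul_pow_of_abs_lt_one (r := 1 / r)
    (by rw [abs_div, abs_one, div_lt_one (zero_lt_one.trans hr)]; exact hr)
  have hlim : Tendsto
      (fun n : ℕ => -(q.eval (n : ℝ) * (t / r) ^ n + h.eval (n : ℝ) * (1 / r) ^ n))
      atTop (𝓝 0) := by
    simpa using (hq.add hh).neg
  refine eq_zero_of_tendsto_eval_natCast_nhds_zero (hlim.congr' ?_)
  filter_upwards [hpqh] with n hn
  have hrn : r ^ n ≠ 0 := pow_ne_zero n hr0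
  rw [div_pow, div_pow, one_pow]
  field_simp
  linear_combination -hn

/-- If `q(n) rⁿ = h(n)`, then `q(n) h(n+1) = r q(n+1) h(n)`; comparing leading coefficients
of this polynomial identity forces `q = 0` or `h = 0`, unless `r = 1`. -/
theorem eq_zero_of_eventually_eval_mul_pow_eq {q h : ℝ[X]} {r : ℝ} (hr0 : r ≠ 0) (hr1 : r ≠ 1)
    (hqh : ∀ᶠ n : ℕ in atTop, q.eval (n : ℝ) * r ^ n = h.eval (n : ℝ)) : q = 0 ∧ h = 0 := by
  have hshift : q * taylor 1 h - C r * taylor 1 q * h = 0 := by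
    refine eq_zero_of_eventually_eval_natCast_eq_zero ?_
    filter_upwards [hqh, (tendsto_add_atTop_nat 1).eventually hqh] with n hn hn1
    push_cast at hn1
    simp only [eval_sub, eval_mul, eval_C, taylor_eval, ← hn, ← hn1]
    ring
  have hq_or_hh : q = 0 ∨ h = 0 := by
    by_contra! hne
    have hlc := congrArg leadingCoeff (sub_eq_zero.1 hshift)
    simp only [leadingCoeff_mul, leadingCoeff_C, leadingCoeff_taylor] at hlc
    have hprod : (1 - r) * (q.leadingCoeff * h.leadingCoeff) = 0 := by linear_combination hlc
    simp [sub_eq_zero, hr1.symm, hne.1, hne.2] at hprod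
  rcases hq_or_hh with rfl | rfl
  · exact ⟨rfl, eq_zero_of_eventually_eval_natCast_eq_zero (by simpa [eq_comm] using hqh)⟩
  · refine ⟨eq_zero_of_eventually_eval_natCast_eq_zero ?_, rfl⟩
    simpa [pow_ne_zero _ hr0] using hqh

theorem surjective_of_degree_sub_smul_lt {K : Type*} [Field K] (L : K[X] →ₗ[K] K[X]) {c : K}
    (hc : c ≠ 0) (hL : ∀ p ≠ 0, (L p - c • p).degree < p.degree) : Function.Surjective L := by
  intro Q
  induction Q using degree_lt_wf.induction with
  | _ Q ih =>
  rcases eq_or_ne Q 0 with rfl | hQ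
  · exact ⟨0, map_zero L⟩
  have hdeg : (Q - L (c⁻¹ • Q)).degree < Q.degree := by
    have hR : Q - L (c⁻¹ • Q) = -c⁻¹ • (L Q - c • Q) := by
      rw [map_smul, smul_sub, smul_smul, neg_mul, inv_mul_cancel₀ hc, neg_smul, neg_smul,
        one_smul]
      abel
    rw [hR]
    exact (degree_smul_le _ _).trans_lt (hL Q hQ)
  obtain ⟨F, hF⟩ := ih _ hdeg
  exact ⟨c⁻¹ • Q + F, by rw [map_add, hF, add_sub_cancel]⟩

/-- `F ↦ b F(x) + a F(x - 1) - F(x - 2)`: summed against a solution of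
`s (n + 2) = a s (n + 1) + b s n` it telescopes. -/
noncomputable def backwardRecurrence {K : Type*} [Field K] (a b : K) : K[X] →ₗ[K] K[X] :=
  b • LinearMap.id + a • taylor (-1) - taylor (-2)

theorem degree_taylor_sub_lt {K : Type*} [Field K] {p : K[X]} (hp : p ≠ 0) (r : K) :
    (taylor r p - p).degree < p.degree :=
  degree_taylor p r ▸ degree_sub_lt_left (degree_taylor p r) (by rwa [Ne, taylor_eq_zero])
    (leadingCoeff_taylor r p)

theorem backwardRecurrence_surjective {K : Type*} [Field K] {a b : K} (hab : a + b ≠ 1) :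
    Function.Surjective (backwardRecurrence a b) := by
  refine surjective_of_degree_sub_smul_lt _ (c := a + b - 1) (sub_ne_zero.2 hab) fun p hp => ?_
  have hsplit : backwardRecurrence a b p - (a + b - 1) • p =
      a • (taylor (-1) p - p) - (taylor (-2) p - p) := by
    simp only [backwardRecurrence, LinearMap.sub_apply, LinearMap.add_apply, LinearMap.smul_apply,
      LinearMap.id_apply, smul_sub, sub_smul, add_smul, one_smul]
    abel
  rw [hsplit]
  exact (degree_sub_le _ _).trans_lt (max_lt ((degree_smul_le _ _).trans_lt
    (degree_taylor_sub_lt hp _)) (degree_taylor_sub_lt hp _))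

theorem sum_eval_backwardRecurrence_mul {K : Type*} [Field K] {a b : K} {s : ℕ → K}
    (hrec : ∀ n, s (n + 2) = a * s (n + 1) + b * s n) (F : K[X]) (n : ℕ) :
    ∑ k ∈ Finset.Icc 1 n, (backwardRecurrence a b F).eval (k : K) * s (k - 1) =
      F.eval (n : K) * s (n + 1) + (taylor (-1) F - C a * F).eval (n : K) * s n -
        (F.eval 0 * s 1 + (taylor (-1) F - C a * F).eval 0 * s 0) := by
  induction n with
  | zero => simp
  | succ n ih =>
    rw [Finset.sum_Icc_succ_top (Nat.le_add_left 1 n), ih, hrec n]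
    simp only [backwardRecurrence, LinearMap.sub_apply, LinearMap.add_apply,
      LinearMap.smul_apply, LinearMap.id_apply, eval_sub, eval_add, eval_smul, eval_mul, eval_C,
      taylor_eval, smul_eq_mul, Nat.add_sub_cancel]
    push_cast
    ring_nf

theorem exists_sum_eval_mul_eq {K : Type*} [Field K] {a b : K} (hab : a + b ≠ 1) {s : ℕ → K}
    (hrec : ∀ n, s (n + 2) = a * s (n + 1) + b * s n) (Q : K[X]) :
    ∃ T : K[X] × K[X] × K[X], ∀ n : ℕ, ∑ k ∈ Finset.Icc 1 n, Q.eval (k : K) * s (k - 1) =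
      T.1.eval (n : K) * s (n + 1) + T.2.1.eval (n : K) * s n + T.2.2.eval (n : K) := by
  obtain ⟨F, rfl⟩ := backwardRecurrence_surjective hab Q
  refine ⟨(F, taylor (-1) F - C a * F,
    C (-(F.eval 0 * s 1 + (taylor (-1) F - C a * F).eval 0 * s 0))), fun n => ?_⟩
  rw [sum_eval_backwardRecurrence_mul hrec F n, eval_C]
  ring

end Polynomial

theorem eq_binet {K : Type*} [Field K] {a b r₁ r₂ : K} (h₁ : r₁ ^ 2 = a * r₁ + b)
    (h₂ : r₂ ^ 2 = a * r₂ + b) (hr : r₁ ≠ r₂) {s : ℕ → K}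
    (hrec : ∀ n, s (n + 2) = a * s (n + 1) + b * s n) (n : ℕ) :
    s n = (s 1 - r₂ * s 0) / (r₁ - r₂) * r₁ ^ n + (r₁ * s 0 - s 1) / (r₁ - r₂) * r₂ ^ n := by
  have hr' : r₁ - r₂ ≠ 0 := sub_ne_zero.2 hr
  induction n using Nat.twoStepInduction with
  | zero => field_simp; ring
  | one => field_simp; ring
  | more n ih₀ ih₁ =>
    rw [hrec, ih₀, ih₁]
    linear_combination -(s 1 - r₂ * s 0) / (r₁ - r₂) * r₁ ^ n * h₁ -
      (r₁ * s 0 - s 1) / (r₁ - r₂) * r₂ ^ n * h₂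

theorem eq_zero_of_eventually_eval_mul_binet_add {r₁ r₂ α β : ℝ} (h₁ : 1 < r₁) (h₂ : |r₂| < r₁)
    (hr₂₀ : r₂ ≠ 0) (hr₂₁ : r₂ ≠ 1) (hα : α ≠ 0) (hβ : β ≠ 0) {s : ℕ → ℝ}
    (hs : ∀ n, s n = α * r₁ ^ n + β * r₂ ^ n) {F G H : ℝ[X]}
    (hFGH : ∀ᶠ n : ℕ in atTop,
      F.eval (n : ℝ) * s (n + 1) + G.eval (n : ℝ) * s n + H.eval (n : ℝ) = 0) :
    F = 0 ∧ G = 0 ∧ H = 0 := by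
  set A := C r₁ * F + G
  set B := C r₂ * F + G
  have hexp : ∀ᶠ n : ℕ in atTop, (C α * A).eval (n : ℝ) * r₁ ^ n +
      (C β * B).eval (n : ℝ) * r₂ ^ n + H.eval (n : ℝ) = 0 := by
    filter_upwards [hFGH] with n hn
    rw [hs, hs] at hn
    simp only [A, B, eval_mul, eval_add, eval_C]
    linear_combination hn
  have habs : |r₁| = r₁ := abs_of_pos (zero_lt_one.trans h₁)
  have hA : A = 0 := by
    simpa [hα] using eq_zero_of_eventually_eval_mul_pow_add (by rwa [habs]) (by rwa [habs]) hexp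
  obtain ⟨hB, hH⟩ : C β * B = 0 ∧ -H = 0 := by
    refine eq_zero_of_eventually_eval_mul_pow_eq hr₂₀ hr₂₁ ?_
    filter_upwards [hexp] with n hn
    simp only [hA, mul_zero, eval_zero, zero_mul, zero_add] at hn
    simp only [eval_neg]
    linear_combination hn
  have hB : B = 0 := by simpa [hβ] using hB
  have hF : C (r₁ - r₂) * F = A - B := by simp only [A, B, C_sub]; ring
  rw [hA, hB, sub_zero, mul_eq_zero, C_eq_zero, sub_eq_zero] at hF
  have hF : F = 0 := hF.resolve_left ((le_abs_self r₂).trans_lt h₂).ne'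
  exact ⟨hF, by simpa [A, hF] using hA, neg_eq_zero.1 hH⟩

theorem stmt_18_general (a b : ℕ) (ha : 0 < a) (hb : 0 < b) (hab : 1 < a + b)
    (c0 c1 : ℤ) (s : ℕ → ℝ)
    (hs0 : s 0 = c0) (hs1 : s 1 = c1)
    (hrec : ∀ n : ℕ, s (n + 2) = a * s (n + 1) + b * s n)
    (h1 : 2 * (c1 : ℝ) - ((a : ℝ) + Real.sqrt ((a : ℝ) ^ 2 + 4 * b)) * c0 ≠ 0)
    (h2 : 2 * (c1 : ℝ) - ((a : ℝ) - Real.sqrt ((a : ℝ) ^ 2 + 4 * b)) * c0 ≠ 0)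
    (P : Polynomial ℝ) :
    ∃! T : Polynomial ℝ × Polynomial ℝ × Polynomial ℝ, ∀ n : ℕ, 1 ≤ n →
      2 * ∑ k ∈ Finset.Icc 1 n, P.eval (k : ℝ) * s (k - 1) =
        T.1.eval (n : ℝ) * s (n + 1) + T.2.1.eval (n : ℝ) * s n + T.2.2.eval (n : ℝ) := by
  set q := Real.sqrt ((a : ℝ) ^ 2 + 4 * b)
  have hq : q ^ 2 = (a : ℝ) ^ 2 + 4 * b := Real.sq_sqrt (by positivity)
  have ha' : (0 : ℝ) < a := by exact_mod_cast ha
  have hb' : (0 : ℝ) < b := by exact_mod_cast hb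
  have hab' : (1 : ℝ) < a + b := by exact_mod_cast hab
  have haq : (a : ℝ) < q := by nlinarith [Real.sqrt_nonneg ((a : ℝ) ^ 2 + 4 * b)]
  have hr₁ : 1 < (a + q) / 2 := by nlinarith
  have hr₂ : |(a - q) / 2| < (a + q) / 2 := by rw [abs_of_neg (by linarith)]; linarith
  have hr : (a + q) / 2 - (a - q) / 2 ≠ 0 := by linarith
  have hbinet := eq_binet (r₁ := (a + q) / 2) (r₂ := (a - q) / 2) (by linear_combination hq / 4)
    (by linear_combination hq / 4) (sub_ne_zero.1 hr) hrec
  obtain ⟨T, hT⟩ := exists_sum_eval_mul_eq hab'.ne' hrec (C 2 * P)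
  simp only [eval_mul, eval_C, mul_assoc, ← Finset.mul_sum] at hT
  refine ⟨T, fun n _ => hT n, fun T' hT' => ?_⟩
  obtain ⟨h₁, h₂, h₃⟩ :=
    eq_zero_of_eventually_eval_mul_binet_add hr₁ hr₂ (by linarith) (by linarith)
      (div_ne_zero (by rw [hs0, hs1]; contrapose! h2; linear_combination 2 * h2) hr)
      (div_ne_zero (by rw [hs0, hs1]; contrapose! h1; linear_combination -2 * h1) hr) hbinet
      (F := T'.1 - T.1) (G := T'.2.1 - T.2.1) (H := T'.2.2 - T.2.2) <| by
        filter_upwards [eventually_ge_atTop 1] with n hn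
        simp only [eval_sub]
        linear_combination hT n - hT' n hn
  rw [sub_eq_zero] at h₁ h₂ h₃
  exact Prod.ext h₁ (Prod.ext h₂ h₃)

theorem stmt_18 (a b : ℕ) (ha : 0 < a) (hb : 0 < b) (hab : 1 < a + b)
    (c0 c1 : ℤ) (hc : (c0, c1) ≠ (0, 0)) (s : ℕ → ℝ)
    (hs0 : s 0 = c0) (hs1 : s 1 = c1)
    (hrec : ∀ n : ℕ, s (n + 2) = a * s (n + 1) + b * s n)
    (h1 : 2 * (c1 : ℝ) - ((a : ℝ) + Real.sqrt ((a : ℝ) ^ 2 + 4 * b)) * c0 ≠ 0)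
    (h2 : 2 * (c1 : ℝ) - ((a : ℝ) - Real.sqrt ((a : ℝ) ^ 2 + 4 * b)) * c0 ≠ 0)
    (P : Polynomial ℝ) :
    ∃! T : Polynomial ℝ × Polynomial ℝ × Polynomial ℝ, ∀ n : ℕ, 1 ≤ n →
      2 * ∑ k ∈ Finset.Icc 1 n, P.eval (k : ℝ) * s (k - 1) =
        T.1.eval (n : ℝ) * s (n + 1) + T.2.1.eval (n : ℝ) * s n + T.2.2.eval (n : ℝ) :=
  stmt_18_general a b ha hb hab c0 c1 s hs0 hs1 hrec h1 h2 P
end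

section
/- Let (s_n) be the generalized Fibonacci sequence with a, b ∈ ℕ⁺ (a + b > 1), c_0, c_1 ∈ ℤ, (c_0,c_1) ≠ (0,0), and suppose exactly one of 2c_1 − j_1·c_0 or 2c_1 − j_2·c_0 equals zero, where j_{1,2} = a ± √(a²+4b). Then for every polynomial P ∈ ℝ[x], there are infinitely many triples (F_1, G_1, H_1) ∈ ℝ[x]³ satisfying 2·∑_{k=1}^n P(k)·s_{k−1} = F_1(n)·s_{n+1} + G_1(n)·s_n + H_1(n) for all positive integers n. -/
/-!
The hypothesis says `c₁ = r c₀` for a root `r = j / 2` of `x² = a x + b`, so `s n = c₀ rⁿ`, and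
`r ≠ 1` because `a + b > 1`. For `r ≠ 1` the operator `Q ↦ r Q(x + 1) - Q(x)` preserves degree
and leading coefficient up to the factor `r - 1`, hence is onto `ℝ[x]`. Choosing `Q` with
`r Q(x + 1) - Q(x) = P(x + 1)`, the sum telescopes to `c₀ (Q(n) rⁿ - Q(0))`, and adding any
multiple of `s (n + 1) - r s n = 0` gives infinitely many triples.
-/

open Polynomial

namespace Polynomial

variable {K : Type*} [Field K]

theorem degree_taylor_sub_lt_s19 {R : Type*} [CommRing R] (c : R) {Q : R[X]} (hQ : Q ≠ 0) :
    (taylor c Q - Q).degree < Q.degree := by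
  simpa using degree_sub_lt_left (degree_taylor Q c) ((taylor_eq_zero c Q).not.2 hQ)
    (leadingCoeff_taylor c Q)

theorem degree_leadingCoeff_C_mul_taylor_sub {r : K} (hr : r ≠ 1) (c : K) (Q : K[X]) :
    (C r * taylor c Q - Q).degree = Q.degree ∧
      (C r * taylor c Q - Q).leadingCoeff = (r - 1) * Q.leadingCoeff := by
  rcases eq_or_ne Q 0 with rfl | hQ
  · simp
  have hr' : r - 1 ≠ 0 := sub_ne_zero.2 hr
  have hsplit : C r * taylor c Q - Q = C (r - 1) * Q + C r * (taylor c Q - Q) := by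
    rw [C_sub, C_1]; ring
  have hlt : (C r * (taylor c Q - Q)).degree < (C (r - 1) * Q).degree := by
    rw [degree_C_mul hr']
    rcases eq_or_ne r 0 with rfl | hr0
    · simpa [bot_lt_iff_ne_bot] using hQ
    · rw [degree_C_mul hr0]
      exact degree_taylor_sub_lt_s19 c hQ
  rw [hsplit, degree_add_eq_left_of_degree_lt hlt, leadingCoeff_add_of_degree_lt' hlt,
    degree_C_mul hr', leadingCoeff_mul, leadingCoeff_C]
  exact ⟨rfl, by simp⟩

theorem exists_C_mul_taylor_sub_eq {r : K} (hr : r ≠ 1) (c : K) (P : K[X]) :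
    ∃ Q : K[X], C r * taylor c Q - Q = P := by
  induction hd : P.natDegree using Nat.strong_induction_on generalizing P with
  | _ d ih =>
  rcases eq_or_ne P 0 with rfl | hP
  · exact ⟨0, by simp⟩
  set Q₀ := C (P.leadingCoeff / (r - 1)) * X ^ d
  set R := P - (C r * taylor c Q₀ - Q₀) with hR_def
  have hQ₀ : Q₀.degree = P.degree ∧ (r - 1) * Q₀.leadingCoeff = P.leadingCoeff := by
    have hr' : r - 1 ≠ 0 := sub_ne_zero.2 hr
    have hc : P.leadingCoeff / (r - 1) ≠ 0 := div_ne_zero (leadingCoeff_ne_zero.2 hP) hr'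
    refine ⟨by rw [degree_C_mul_X_pow d hc, degree_eq_natDegree hP, hd], ?_⟩
    rw [leadingCoeff_C_mul_X_pow]
    field_simp
  obtain ⟨hdeg, hlc⟩ := degree_leadingCoeff_C_mul_taylor_sub hr c Q₀
  rcases eq_or_ne R 0 with hR | hR
  · exact ⟨Q₀, (sub_eq_zero.1 hR).symm⟩
  have hRd : R.natDegree < d := hd ▸ natDegree_lt_natDegree hR
    (degree_sub_lt_left (hdeg.trans hQ₀.1).symm hP (hlc.trans hQ₀.2).symm)
  obtain ⟨Q₁, hQ₁⟩ := ih _ hRd R rfl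
  refine ⟨Q₀ + Q₁, ?_⟩
  rw [hR_def] at hQ₁
  rw [map_add]
  linear_combination hQ₁

theorem sum_Icc_eval_mul_pow_eq {R : Type*} [CommRing R] {r : R} {P Q : R[X]}
    (hQ : C r * taylor 1 Q - Q = taylor 1 P) (n : ℕ) :
    ∑ k ∈ Finset.Icc 1 n, P.eval (k : R) * r ^ (k - 1) = Q.eval (n : R) * r ^ n - Q.eval 0 := by
  induction n with
  | zero => simp
  | succ n ih =>
    have step := congrArg (eval (n : R)) hQ
    simp only [eval_sub, eval_mul, eval_C, taylor_eval] at step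
    rw [Finset.sum_Icc_succ_top (Nat.le_add_left 1 n), ih, Nat.add_sub_cancel]
    push_cast
    linear_combination -r ^ n * step

end Polynomial

theorem eq_mul_pow_of_two_step_rec {R : Type*} [CommRing R] {a b c r : R}
    (hr : r ^ 2 = a * r + b) {s : ℕ → R} (h0 : s 0 = c) (h1 : s 1 = c * r)
    (hrec : ∀ n, s (n + 2) = a * s (n + 1) + b * s n) (n : ℕ) : s n = c * r ^ n := by
  induction n using Nat.twoStepInduction with
  | zero => simpa using h0
  | one => simpa using h1
  | more n ih₀ ih₁ =>
    rw [hrec, ih₀, ih₁]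
    linear_combination -c * r ^ n * hr

theorem infinite_setOf_sum_eval_mul_geometric {s : ℕ → ℝ} {c r : ℝ} (hr : r ≠ 1)
    (hs : ∀ n, s n = c * r ^ n) (P : ℝ[X]) :
    {T : ℝ[X] × ℝ[X] × ℝ[X] | ∀ n : ℕ, 1 ≤ n →
      2 * ∑ k ∈ Finset.Icc 1 n, P.eval (k : ℝ) * s (k - 1) =
        T.1.eval (n : ℝ) * s (n + 1) + T.2.1.eval (n : ℝ) * s n +
          T.2.2.eval (n : ℝ)}.Infinite := by
  obtain ⟨Q, hQ⟩ := exists_C_mul_taylor_sub_eq hr 1 (taylor 1 P)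
  -- `t * (s (n + 1) - r * s n)` vanishes, so every `t : ℝ` gives a closed form.
  refine Set.infinite_of_injective_forall_mem
    (f := fun t : ℝ ↦ (C t, 2 * Q - C (t * r), C (-2 * c * Q.eval 0)))
    (fun t t' htt' ↦ C_injective (congrArg Prod.fst htt')) fun t n _ ↦ ?_
  have hsum : ∑ k ∈ Finset.Icc 1 n, P.eval (k : ℝ) * s (k - 1) =
      c * (Q.eval (n : ℝ) * r ^ n - Q.eval 0) := by
    simp_rw [hs, mul_left_comm _ c, ← Finset.mul_sum, sum_Icc_eval_mul_pow_eq hQ]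
  rw [hsum, hs, hs]
  simp only [eval_sub, eval_mul, eval_C, eval_ofNat]
  ring

theorem stmt_19_general (a b : ℕ) (hab : 1 < a + b)
    (c0 c1 : ℤ) (s : ℕ → ℝ)
    (hs0 : s 0 = c0) (hs1 : s 1 = c1)
    (hrec : ∀ n : ℕ, s (n + 2) = a * s (n + 1) + b * s n)
    (h : (2 * (c1 : ℝ) - ((a : ℝ) + Real.sqrt ((a : ℝ) ^ 2 + 4 * b)) * c0 = 0 ∧
          2 * (c1 : ℝ) - ((a : ℝ) - Real.sqrt ((a : ℝ) ^ 2 + 4 * b)) * c0 ≠ 0) ∨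
         (2 * (c1 : ℝ) - ((a : ℝ) + Real.sqrt ((a : ℝ) ^ 2 + 4 * b)) * c0 ≠ 0 ∧
          2 * (c1 : ℝ) - ((a : ℝ) - Real.sqrt ((a : ℝ) ^ 2 + 4 * b)) * c0 = 0))
    (P : Polynomial ℝ) :
    {T : Polynomial ℝ × Polynomial ℝ × Polynomial ℝ | ∀ n : ℕ, 1 ≤ n →
      2 * ∑ k ∈ Finset.Icc 1 n, P.eval (k : ℝ) * s (k - 1) =
        T.1.eval (n : ℝ) * s (n + 1) + T.2.1.eval (n : ℝ) * s n +
          T.2.2.eval (n : ℝ)}.Infinite := by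
  obtain ⟨r, hr, hc1⟩ : ∃ r : ℝ, r ^ 2 = a * r + b ∧ (c1 : ℝ) = c0 * r := by
    have he : √((a : ℝ) ^ 2 + 4 * b) ^ 2 = (a : ℝ) ^ 2 + 4 * b := Real.sq_sqrt (by positivity)
    rcases h with ⟨h, -⟩ | ⟨-, h⟩
    · exact ⟨(a + √((a : ℝ) ^ 2 + 4 * b)) / 2, by linear_combination he / 4, by linarith⟩
    · exact ⟨(a - √((a : ℝ) ^ 2 + 4 * b)) / 2, by linear_combination he / 4, by linarith⟩
  have hr1 : r ≠ 1 := by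
    rintro rfl
    have : (1 : ℝ) < a + b := by exact_mod_cast hab
    linarith
  exact infinite_setOf_sum_eval_mul_geometric hr1
    (eq_mul_pow_of_two_step_rec hr hs0 (hs1.trans hc1) hrec) P

theorem stmt_19 (a b : ℕ) (ha : 0 < a) (hb : 0 < b) (hab : 1 < a + b)
    (c0 c1 : ℤ) (hc : (c0, c1) ≠ (0, 0)) (s : ℕ → ℝ)
    (hs0 : s 0 = c0) (hs1 : s 1 = c1)
    (hrec : ∀ n : ℕ, s (n + 2) = a * s (n + 1) + b * s n)
    (h : (2 * (c1 : ℝ) - ((a : ℝ) + Real.sqrt ((a : ℝ) ^ 2 + 4 * b)) * c0 = 0 ∧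
          2 * (c1 : ℝ) - ((a : ℝ) - Real.sqrt ((a : ℝ) ^ 2 + 4 * b)) * c0 ≠ 0) ∨
         (2 * (c1 : ℝ) - ((a : ℝ) + Real.sqrt ((a : ℝ) ^ 2 + 4 * b)) * c0 ≠ 0 ∧
          2 * (c1 : ℝ) - ((a : ℝ) - Real.sqrt ((a : ℝ) ^ 2 + 4 * b)) * c0 = 0))
    (P : Polynomial ℝ) :
    {T : Polynomial ℝ × Polynomial ℝ × Polynomial ℝ | ∀ n : ℕ, 1 ≤ n →
      2 * ∑ k ∈ Finset.Icc 1 n, P.eval (k : ℝ) * s (k - 1) =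
        T.1.eval (n : ℝ) * s (n + 1) + T.2.1.eval (n : ℝ) * s n +
          T.2.2.eval (n : ℝ)}.Infinite :=
  stmt_19_general a b hab c0 c1 s hs0 hs1 hrec h P
end
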